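/- arXiv:2212.13745 — 2 statements merged into one kernel-verified Lean document; each statement's English description precedes it below -/
import Mathlib

section
/- Let w : (0,∞) → [0,∞) be continuous with ∫₀^∞ w(s)/s ds < ∞, set E(r) = exp(−4π ∫_r^∞ w(s)/s ds) and E(0) = lim_{r→0} E(r). Then for every δ ∈ (0,1): δ ∫_δ^∞ E(r) w(r)/r² dr ≤ (1/(4π)) ( E(√δ) − E(δ) + √δ (1 − E(√δ)) ), and consequently δ ∫_δ^∞ E(r) w(r)/r² dr → 0 as δ → 0. -/
/-!
With `G = E / (4π)`, differentiating the tail integral gives `G' = E w / r ≥ 0` on `(0, ∞)`, and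
`G ≤ 1 / (4π)`; the integrand is `G'(r) / r`. On `(δ, √δ]` we use `δ / r ≤ 1`, which leaves
`∫ G' = G(√δ) - G(δ)`, and on `(√δ, ∞)` we use `δ / r ≤ √δ`, which leaves
`√δ ∫ G' ≤ √δ (1 / (4π) - G(√δ))`. Being monotone and bounded below, `G` has a limit at `0⁺`,
so `G(√δ) - G(δ) → 0` and the whole bound tends to `0`.
-/

open Real MeasureTheory Set Filter Topology

theorem hasDerivAt_integral_Ioi {F : Type*} [NormedAddCommGroup F] [NormedSpace ℝ F]
    [CompleteSpace F] {f : ℝ → F} {a r : ℝ} (hf : IntegrableOn f (Ioi a)) (hr : a < r)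
    (hfr : ContinuousAt f r) :
    HasDerivAt (fun x => ∫ s in Ioi x, f s) (-f r) r := by
  have hprim : HasDerivAt (fun x => ∫ s in a..x, f s) (f r) r :=
    intervalIntegral.integral_hasDerivAt_right
      ((intervalIntegrable_iff_integrableOn_Ioc_of_le hr.le).2 (hf.mono_set Ioc_subset_Ioi_self))
      (AEStronglyMeasurable.stronglyMeasurableAtFilter_of_mem hf.aestronglyMeasurable
        (Ioi_mem_nhds hr)) hfr
  refine (hprim.const_sub (∫ s in Ioi a, f s)).congr_of_eventuallyEq ?_
  filter_upwards [Ioi_mem_nhds hr] with x hx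
  rw [← intervalIntegral.integral_Ioi_sub_Ioi hf (le_of_lt hx), sub_sub_cancel]

theorem hasDerivAt_exp_neg_mul_integral_Ioi_div {f : ℝ → ℝ} {a r c : ℝ} (hc : c ≠ 0)
    (hf : IntegrableOn f (Ioi a)) (hr : a < r) (hfr : ContinuousAt f r) :
    HasDerivAt (fun x => exp (-c * ∫ s in Ioi x, f s) / c)
      (exp (-c * ∫ s in Ioi r, f s) * f r) r := by
  refine (((hasDerivAt_integral_Ioi hf hr hfr).const_mul (-c)).exp.div_const c).congr_deriv ?_
  field_simp

theorem MonotoneOn.exists_tendsto_atTop_le {G : ℝ → ℝ} {a M : ℝ} (hG : MonotoneOn G (Ioi a))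
    (hM : ∀ x ∈ Ioi a, G x ≤ M) : ∃ l ≤ M, Tendsto G atTop (𝓝 l) := by
  have hmem : ∀ x, max x (a + 1) ∈ Ioi a := fun x =>
    lt_of_lt_of_le (lt_add_one a) (le_max_right _ _)
  have hmono : Monotone fun x => G (max x (a + 1)) := fun x y hxy =>
    hG (hmem x) (hmem y) (max_le_max_right _ hxy)
  have hbdd : BddAbove (range fun x => G (max x (a + 1))) :=
    ⟨M, by rintro _ ⟨x, rfl⟩; exact hM _ (hmem x)⟩
  refine ⟨_, ciSup_le fun x => hM _ (hmem x), (tendsto_atTop_ciSup hmono hbdd).congr' ?_⟩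
  filter_upwards [eventually_ge_atTop (a + 1)] with x hx
  rw [max_eq_left hx]

theorem MeasureTheory.IntegrableOn.div_self_Ioi {f : ℝ → ℝ} {a : ℝ}
    (hf : IntegrableOn f (Ioi a)) (ha : 0 < a) : IntegrableOn (fun x => f x / x) (Ioi a) := by
  simp_rw [div_eq_mul_inv]
  refine Integrable.mul_bdd (c := a⁻¹) hf measurable_inv.aestronglyMeasurable ?_
  filter_upwards [ae_restrict_mem measurableSet_Ioi] with x hx
  rw [norm_inv, Real.norm_of_nonneg (ha.trans hx).le]
  exact inv_anti₀ ha (le_of_lt hx)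

theorem mul_setIntegral_div_le {g : ℝ → ℝ} {s : Set ℝ} {δ c : ℝ} (hs : MeasurableSet s)
    (hs0 : s ⊆ Ioi 0) (hgi : IntegrableOn g s) (hg : ∀ r ∈ s, 0 ≤ g r) (hδ : 0 ≤ δ)
    (hδc : ∀ r ∈ s, δ ≤ c * r) :
    δ * ∫ r in s, g r / r ≤ c * ∫ r in s, g r := by
  rw [← integral_const_mul, ← integral_const_mul]
  refine integral_mono_of_nonneg (ae_restrict_of_forall_mem hs fun r hr => ?_)
    (hgi.const_mul c) (ae_restrict_of_forall_mem hs fun r hr => ?_)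
  · exact mul_nonneg hδ (div_nonneg (hg r hr) (hs0 hr).le)
  · calc δ * (g r / r) = δ / r * g r := by ring
      _ ≤ c * g r := mul_le_mul_of_nonneg_right ((div_le_iff₀ (hs0 hr)).2 (hδc r hr)) (hg r hr)

section Antiderivative

variable {G g : ℝ → ℝ} {a M : ℝ}

theorem monotoneOn_Ioi_of_hasDerivAt_nonneg (hG : ∀ x ∈ Ioi a, HasDerivAt G (g x) x)
    (hg : ∀ x ∈ Ioi a, 0 ≤ g x) : MonotoneOn G (Ioi a) :=
  monotoneOn_of_hasDerivWithinAt_nonneg (convex_Ioi a)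
    (fun x hx => (hG x hx).continuousAt.continuousWithinAt)
    (fun x hx => (hG x (interior_subset hx)).hasDerivWithinAt)
    (fun x hx => hg x (interior_subset hx))

theorem integrableOn_Ioi_of_hasDerivAt_nonneg_of_le (hG : ∀ x ∈ Ioi a, HasDerivAt G (g x) x)
    (hg : ∀ x ∈ Ioi a, 0 ≤ g x) (hM : ∀ x ∈ Ioi a, G x ≤ M) {b : ℝ} (hab : a < b) :
    IntegrableOn g (Ioi b) := by
  obtain ⟨l, -, hl⟩ := (monotoneOn_Ioi_of_hasDerivAt_nonneg hG hg).exists_tendsto_atTop_le hM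
  exact integrableOn_Ioi_deriv_of_nonneg' (fun x hx => hG x (hab.trans_le hx))
    (fun x hx => hg x (hab.trans hx)) hl

theorem integral_Ioi_le_of_hasDerivAt_nonneg_of_le (hG : ∀ x ∈ Ioi a, HasDerivAt G (g x) x)
    (hg : ∀ x ∈ Ioi a, 0 ≤ g x) (hM : ∀ x ∈ Ioi a, G x ≤ M) {b : ℝ} (hab : a < b) :
    ∫ x in Ioi b, g x ≤ M - G b := by
  obtain ⟨l, hlM, hl⟩ := (monotoneOn_Ioi_of_hasDerivAt_nonneg hG hg).exists_tendsto_atTop_le hM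
  rw [integral_Ioi_of_hasDerivAt_of_nonneg' (fun x hx => hG x (hab.trans_le hx))
    (fun x hx => hg x (hab.trans hx)) hl]
  linarith

theorem mul_integral_Ioi_div_le_sqrt (hG : ∀ x ∈ Ioi 0, HasDerivAt G (g x) x)
    (hg : ∀ x ∈ Ioi 0, 0 ≤ g x) (hM : ∀ x ∈ Ioi 0, G x ≤ M) {δ : ℝ} (hδ0 : 0 < δ)
    (hδ1 : δ ≤ 1) :
    δ * ∫ r in Ioi δ, g r / r ≤ G √δ - G δ + √δ * (M - G √δ) := by
  set σ := √δ
  have hσ : 0 < σ := sqrt_pos.2 hδ0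
  have hσσ : σ * σ = δ := mul_self_sqrt hδ0.le
  have hδσ : δ ≤ σ := by nlinarith [sqrt_le_one.2 hδ1]
  have hgδ : IntegrableOn g (Ioi δ) := integrableOn_Ioi_of_hasDerivAt_nonneg_of_le hG hg hM hδ0
  have hIoi : Ioi δ ⊆ Ioi 0 := Ioi_subset_Ioi hδ0.le
  have hnear : δ * ∫ r in Ioc δ σ, g r / r ≤ G σ - G δ :=
    calc δ * ∫ r in Ioc δ σ, g r / r ≤ 1 * ∫ r in Ioc δ σ, g r :=
          mul_setIntegral_div_le measurableSet_Ioc (Ioc_subset_Ioi_self.trans hIoi)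
            (hgδ.mono_set Ioc_subset_Ioi_self) (fun r hr => hg r (hδ0.trans hr.1)) hδ0.le
            fun r hr => by linarith [hr.1]
      _ = G σ - G δ := by
          rw [one_mul, ← intervalIntegral.integral_of_le hδσ]
          exact intervalIntegral.integral_eq_sub_of_hasDerivAt_of_le hδσ
            (fun x hx => (hG x (hδ0.trans_le hx.1)).continuousAt.continuousWithinAt)
            (fun x hx => hG x (hδ0.trans hx.1))
            ((intervalIntegrable_iff_integrableOn_Ioc_of_le hδσ).2
              (hgδ.mono_set Ioc_subset_Ioi_self))
  have hfar : δ * ∫ r in Ioi σ, g r / r ≤ σ * (M - G σ) :=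
    calc δ * ∫ r in Ioi σ, g r / r ≤ σ * ∫ r in Ioi σ, g r :=
          mul_setIntegral_div_le measurableSet_Ioi (Ioi_subset_Ioi hσ.le)
            (hgδ.mono_set (Ioi_subset_Ioi hδσ)) (fun r hr => hg r (hσ.trans hr)) hδ0.le
            fun r hr => by nlinarith [mem_Ioi.1 hr]
      _ ≤ σ * (M - G σ) :=
          mul_le_mul_of_nonneg_left (integral_Ioi_le_of_hasDerivAt_nonneg_of_le hG hg hM hσ) hσ.le
  have hgr : IntegrableOn (fun r => g r / r) (Ioi δ) := hgδ.div_self_Ioi hδ0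
  have hsplit : ∫ r in Ioi δ, g r / r = (∫ r in Ioc δ σ, g r / r) + ∫ r in Ioi σ, g r / r := by
    rw [← Ioc_union_Ioi_eq_Ioi hδσ, setIntegral_union Ioc_disjoint_Ioi_same measurableSet_Ioi
      (hgr.mono_set Ioc_subset_Ioi_self) (hgr.mono_set (Ioi_subset_Ioi hδσ))]
  rw [hsplit, mul_add]
  linarith

theorem tendsto_mul_integral_Ioi_div_nhdsGT_zero (hG : ∀ x ∈ Ioi 0, HasDerivAt G (g x) x)
    (hg : ∀ x ∈ Ioi 0, 0 ≤ g x) (hM : ∀ x ∈ Ioi 0, G x ≤ M) (hbdd : BddBelow (G '' Ioi 0)) :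
    Tendsto (fun δ => δ * ∫ r in Ioi δ, g r / r) (𝓝[>] 0) (𝓝 0) := by
  have hGL : Tendsto G (𝓝[>] 0) (𝓝 (sInf (G '' Ioi 0))) :=
    (monotoneOn_Ioi_of_hasDerivAt_nonneg hG hg).tendsto_nhdsGT hbdd
  have hsqrt : Tendsto (√·) (𝓝[>] 0) (𝓝[>] 0) :=
    tendsto_nhdsWithin_of_tendsto_nhds_of_eventually_within _
      (by simpa using continuous_sqrt.continuousWithinAt.tendsto (x := 0) (s := Ioi 0))
      (eventually_nhdsWithin_of_forall fun x hx => sqrt_pos.2 hx)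
  have hbound : Tendsto (fun δ => G √δ - G δ + √δ * (M - G √δ)) (𝓝[>] 0) (𝓝 0) := by
    simpa using ((hGL.comp hsqrt).sub hGL).add
      ((hsqrt.mono_right nhdsWithin_le_nhds).mul (tendsto_const_nhds.sub (hGL.comp hsqrt)))
  refine tendsto_of_tendsto_of_tendsto_of_le_of_le' tendsto_const_nhds hbound ?_ ?_
  · filter_upwards [self_mem_nhdsWithin] with δ hδ
    refine mul_nonneg (le_of_lt hδ) (setIntegral_nonneg measurableSet_Ioi fun r hr => ?_)
    have hr0 : (0 : ℝ) < r := lt_trans hδ hr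
    exact div_nonneg (hg r hr0) hr0.le
  · filter_upwards [Ioo_mem_nhdsGT one_pos] with δ hδ
    exact mul_integral_Ioi_div_le_sqrt hG hg hM hδ.1 hδ.2.le

end Antiderivative

/-- With `w ≥ 0` continuous on `(0,∞)` and `∫₀^∞ w(s)/s ds < ∞`, set
`E r = exp(-4π ∫_r^∞ w(s)/s ds)`. Then for every `δ ∈ (0,1)`:
`δ ∫_δ^∞ E w / r² dr ≤ (1/4π)(E(√δ) - E(δ) + √δ (1 - E(√δ)))`, and hence
`δ ∫_δ^∞ E w / r² dr → 0` as `δ → 0⁺`. -/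
theorem delta_weighted_integral_vanishes
    (w : ℝ → ℝ) (hw : ∀ s, 0 ≤ w s) (hwc : ContinuousOn w (Set.Ioi 0))
    (hint : IntegrableOn (fun s => w s / s) (Set.Ioi 0) volume)
    (E : ℝ → ℝ)
    (hE : ∀ r, E r = Real.exp (-(4 * π) * ∫ s in Set.Ioi r, w s / s)) :
    (∀ δ : ℝ, δ ∈ Set.Ioo (0:ℝ) 1 →
      δ * (∫ r in Set.Ioi δ, E r * w r / r ^ 2)
        ≤ (1 / (4 * π)) *
            (E (Real.sqrt δ) - E δ + Real.sqrt δ * (1 - E (Real.sqrt δ)))) ∧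
    Tendsto (fun δ : ℝ => δ * ∫ r in Set.Ioi δ, E r * w r / r ^ 2)
      (nhdsWithin 0 (Set.Ioi 0)) (nhds 0) := by
  have hπ : 0 < 4 * π := by positivity
  set G : ℝ → ℝ := fun r => E r / (4 * π)
  set g : ℝ → ℝ := fun r => E r * (w r / r)
  have hG : ∀ r ∈ Ioi (0 : ℝ), HasDerivAt G (g r) r := fun r hr => by
    have hc : ContinuousAt (fun s => w s / s) r :=
      (hwc.continuousAt (Ioi_mem_nhds hr)).div continuousAt_id hr.ne'
    simpa only [G, g, hE] using hasDerivAt_exp_neg_mul_integral_Ioi_div hπ.ne' hint hr hc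
  have hg : ∀ r ∈ Ioi (0 : ℝ), 0 ≤ g r := fun r hr =>
    mul_nonneg (by rw [hE]; positivity) (div_nonneg (hw r) hr.le)
  have hM : ∀ r ∈ Ioi (0 : ℝ), G r ≤ 1 / (4 * π) := fun r hr => by
    have htail : 0 ≤ ∫ s in Ioi r, w s / s := setIntegral_nonneg measurableSet_Ioi fun s hs =>
      div_nonneg (hw s) (hr.trans hs).le
    have hE1 : E r ≤ 1 := by rw [hE, exp_le_one_iff]; nlinarith
    exact div_le_div_of_nonneg_right hE1 hπ.le
  have hbdd : BddBelow (G '' Ioi 0) :=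
    ⟨0, by rintro _ ⟨r, -, rfl⟩; simp only [G, hE]; positivity⟩
  have hintegrand : (fun r => E r * w r / r ^ 2) = fun r => g r / r := by
    funext r; simp only [g]; ring
  refine ⟨fun δ hδ => ?_, ?_⟩
  · rw [hintegrand]
    calc _ ≤ G √δ - G δ + √δ * (1 / (4 * π) - G √δ) :=
          mul_integral_Ioi_div_le_sqrt hG hg hM hδ.1 hδ.2.le
      _ = _ := by simp only [G]; ring
  · rw [hintegrand]
    exact tendsto_mul_integral_Ioi_div_nhdsGT_zero hG hg hM hbdd
end

section
/- Let u₀ > 0 and let ξ : [0,u₀] × (0,∞) → ℝ, E : [0,u₀] × (0,∞) → (0,1] be such that for each u, r ↦ ξ(u,r) is continuous with ξ(u,r) → 0 as r → 0, E(u,·) is nondecreasing in r and continuous, and suppose ∫₀^{u₀} ∫₀^{r₀} ξ(u,r)² / (r E(u,r)) dr du < ∞ for every r₀ > 0, together with the Sobolev bound sup_{r ∈ [0,r₀]} (ξ²/E)(u,r) ≤ C ( ∫₀^{r₀} ξ²/(rE)(u,r) dr + c⁴ r₀³ F(u) + (1/2π)(E(u,r₀) − E(u,0⁺)) ) for a continuous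 F and constant C. If additionally E is continuous up to r = 0 uniformly in u, then lim_{r→0} ∫₀^{u₀} (ξ²/E)(u,r) du = 0. -/
open Real MeasureTheory intervalIntegral Set Filter

/-!
Apply the Sobolev bound with `r₀ = r` and integrate it over `u`. By Fubini the first term
integrates to the integral of `ξ²/(rE)` over the strip `[0,u₀] × (0,r]`, which tends to zero by
absolute continuity of the integral; the `F`-term is `O(r³)`; and the `E`-term is at most any
`δ > 0` for small `r`, by the uniform continuity of `E` at the center.
-/

theorem tendsto_zero_of_forall_eventually_le_add_mul {ι : Type*} {l : Filter ι} {J G : ι → ℝ}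
    (K : ℝ) (hG : Tendsto G l (nhds 0)) (hJ0 : ∀ᶠ i in l, 0 ≤ J i)
    (hJ : ∀ δ > 0, ∀ᶠ i in l, J i ≤ G i + K * δ) : Tendsto J l (nhds 0) := by
  refine tendsto_order.2 ⟨fun a ha => hJ0.mono fun i hi => ha.trans_le hi, fun a ha => ?_⟩
  have hδ : 0 < a / (2 * (|K| + 1)) := by positivity
  have hKδ : K * (a / (2 * (|K| + 1))) < a / 2 := by
    calc K * (a / (2 * (|K| + 1))) ≤ |K| * (a / (2 * (|K| + 1))) := by gcongr; exact le_abs_self K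
      _ < (|K| + 1) * (a / (2 * (|K| + 1))) := by gcongr; linarith
      _ = a / 2 := by field_simp
  filter_upwards [hJ _ hδ, hG.eventually (gt_mem_nhds (half_pos ha))] with i hJi hGi
  linarith

theorem le_abs_mul_add_of_le_mul_add {x C a b k d δ : ℝ} (h : x ≤ C * (a + b + k * d))
    (ha : 0 ≤ a) (hk : 0 ≤ k) (hd : |d| ≤ δ) : x ≤ |C| * (a + |b| + k * δ) := by
  calc x ≤ |C * (a + b + k * d)| := h.trans (le_abs_self _)
    _ = |C| * |a + b + k * d| := abs_mul _ _
    _ ≤ |C| * (a + |b| + k * δ) := by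
      gcongr
      calc |a + b + k * d| ≤ |a| + |b| + |k * d| := abs_add_three _ _ _
        _ ≤ a + |b| + k * δ := by
          rw [abs_of_nonneg ha, abs_mul, abs_of_nonneg hk]
          gcongr

section Prod

variable {α β : Type*} [MeasurableSpace α] [MeasurableSpace β] {μ : Measure α} {ν : Measure β}
  [SFinite ν]

theorem tendsto_setIntegral_prod_Ioc_nhdsGT [SigmaFinite μ] {E : Type*} [NormedAddCommGroup E]
    [NormedSpace ℝ E] {s : Set α} (hs : μ s ≠ ⊤) {f : α × ℝ → E} {a b : ℝ} (hab : a < b)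
    (hf : IntegrableOn f (s ×ˢ Ioc a b) (μ.prod volume)) :
    Tendsto (fun r => ∫ p in s ×ˢ Ioc a r, f p ∂μ.prod volume) (nhdsWithin a (Ioi a))
      (nhds 0) := by
  have hmeas : Tendsto (fun r => μ.prod volume (s ×ˢ Ioc a r)) (nhdsWithin a (Ioi a))
      (nhds 0) := by
    simp only [Measure.prod_prod, Real.volume_Ioc]
    have hlen : Tendsto (fun r => ENNReal.ofReal (r - a)) (nhdsWithin a (Ioi a)) (nhds 0) :=
      ENNReal.ofReal_zero ▸ ENNReal.tendsto_ofReal (tendsto_nhdsWithin_of_tendsto_nhds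
        ((continuous_sub_right a).tendsto' a 0 (sub_self a)))
    simpa using ENNReal.Tendsto.const_mul hlen (Or.inr hs)
  refine (hf.tendsto_setIntegral_nhds_zero (s := fun r => s ×ˢ Ioc a r)
    (tendsto_of_tendsto_of_tendsto_of_le_of_le tendsto_const_nhds hmeas (fun _ => zero_le)
      fun _ => Measure.restrict_apply_le _ _)).congr' ?_
  filter_upwards [Ioc_mem_nhdsGT hab] with r hr
  rw [Measure.restrict_restrict_of_subset (prod_mono le_rfl (Ioc_subset_Ioc_right hr.2))]

theorem setIntegral_le_mul_setIntegral_prod_add [SFinite μ] {s : Set α} {t : Set β}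
    (hs_meas : MeasurableSet s) (hs : μ s ≠ ⊤) {g b : α → ℝ} {f : α × β → ℝ} {c K : ℝ}
    (hf : IntegrableOn f (s ×ˢ t) (μ.prod ν)) (hb : IntegrableOn b s μ) (hg0 : ∀ x ∈ s, 0 ≤ g x)
    (hg : ∀ x ∈ s, g x ≤ c * ((∫ y in t, f (x, y) ∂ν) + b x + K)) :
    ∫ x in s, g x ∂μ ≤
      c * ((∫ p in s ×ˢ t, f p ∂μ.prod ν) + (∫ x in s, b x ∂μ) + K * μ.real s) := by
  have hI : IntegrableOn (fun x => ∫ y in t, f (x, y) ∂ν) s μ := by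
    rw [IntegrableOn, ← Measure.prod_restrict] at hf
    exact hf.integral_prod_left
  have hIb : IntegrableOn (fun x => (∫ y in t, f (x, y) ∂ν) + b x) s μ := hI.add hb
  have hK : IntegrableOn (fun _ => K) s μ := integrableOn_const hs
  calc ∫ x in s, g x ∂μ ≤ ∫ x in s, c * ((∫ y in t, f (x, y) ∂ν) + b x + K) ∂μ :=
        integral_mono_of_nonneg ((ae_restrict_iff' hs_meas).2 (ae_of_all _ hg0))
          ((hIb.add hK).const_mul c) ((ae_restrict_iff' hs_meas).2 (ae_of_all _ hg))
    _ = _ := by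
      rw [MeasureTheory.integral_const_mul, integral_add hIb hK, integral_add hI hb,
        setIntegral_const, setIntegral_prod f hf, smul_eq_mul, mul_comm K]

end Prod

theorem xi_over_sqrtE_vanishes_at_center_general
    (u₀ : ℝ) (hu₀ : 0 < u₀)
    (ξ E : ℝ → ℝ → ℝ) (E0 : ℝ → ℝ) (C c : ℝ) (F : ℝ → ℝ)
    (hF : Continuous F)
    (hErange : ∀ u ∈ Set.Icc (0:ℝ) u₀, ∀ r > (0:ℝ), E u r ∈ Set.Ioc (0:ℝ) 1)
    (hInt : ∀ r₀ > (0:ℝ),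
      IntegrableOn (fun p : ℝ × ℝ => ξ p.1 p.2 ^ 2 / (p.2 * E p.1 p.2))
        (Set.Icc 0 u₀ ×ˢ Set.Ioc 0 r₀) volume)
    (hSobolev : ∀ u ∈ Set.Icc (0:ℝ) u₀, ∀ r₀ > (0:ℝ), ∀ r ∈ Set.Ioc (0:ℝ) r₀,
      ξ u r ^ 2 / E u r
        ≤ C * ((∫ s in Set.Ioc (0:ℝ) r₀, ξ u s ^ 2 / (s * E u s))
            + c ^ 4 * r₀ ^ 3 * F u
            + (1 / (2 * π)) * (E u r₀ - E0 u)))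
    (hEunif : ∀ ε > (0:ℝ), ∃ r₀ > (0:ℝ), ∀ u ∈ Set.Icc (0:ℝ) u₀,
      ∀ r ∈ Set.Ioc (0:ℝ) r₀, |E u r - E0 u| ≤ ε) :
    Tendsto (fun r : ℝ => ∫ u in (0:ℝ)..u₀, ξ u r ^ 2 / E u r)
      (nhdsWithin 0 (Set.Ioi 0)) (nhds 0) := by
  set f : ℝ × ℝ → ℝ := fun p => ξ p.1 p.2 ^ 2 / (p.2 * E p.1 p.2)
  have hf : ∀ r > 0, IntegrableOn f (Ioc 0 u₀ ×ˢ Ioc 0 r) (volume.prod volume) := fun r hr =>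
    (hInt r hr).mono_set (prod_mono Ioc_subset_Icc_self le_rfl)
  have hFr : ∀ r, IntegrableOn (fun u => |c ^ 4 * r ^ 3 * F u|) (Ioc 0 u₀) :=
    fun r => (continuous_const.mul hF).abs.integrableOn_Ioc
  have hEpos : ∀ u ∈ Ioc 0 u₀, ∀ r > (0:ℝ), 0 < E u r := fun u hu r hr =>
    (hErange u (Ioc_subset_Icc_self hu) r hr).1
  have hu₀_fin : volume (Ioc 0 u₀) ≠ ⊤ := measure_Ioc_lt_top.ne
  simp_rw [intervalIntegral.integral_of_le hu₀.le]
  refine tendsto_zero_of_forall_eventually_le_add_mul (|C| * (1 / (2 * π)) * u₀)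
    (G := fun r => |C| * ((∫ p in Ioc 0 u₀ ×ˢ Ioc 0 r, f p ∂volume.prod volume)
      + ∫ u in Ioc 0 u₀, |c ^ 4 * r ^ 3 * F u|)) ?_ ?_ ?_
  · have hstrip := tendsto_setIntegral_prod_Ioc_nhdsGT hu₀_fin one_pos (hf 1 one_pos)
    have hFterm : Tendsto (fun r : ℝ => |c ^ 4 * r ^ 3| * ∫ u in Ioc 0 u₀, |F u|)
        (nhds 0) (nhds 0) := (by fun_prop : Continuous _).tendsto' 0 0 (by simp)
    simp_rw [abs_mul (c ^ 4 * _), MeasureTheory.integral_const_mul]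
    simpa using (hstrip.add (hFterm.mono_left nhdsWithin_le_nhds)).const_mul |C|
  · filter_upwards [self_mem_nhdsWithin] with r hr
    exact setIntegral_nonneg measurableSet_Ioc fun u hu =>
      div_nonneg (sq_nonneg _) (hEpos u hu r hr).le
  · intro δ hδ
    obtain ⟨r₀, hr₀, hE⟩ := hEunif δ hδ
    filter_upwards [Ioc_mem_nhdsGT hr₀] with r hr
    have hI_nonneg : ∀ u ∈ Ioc 0 u₀, 0 ≤ ∫ s in Ioc 0 r, f (u, s) :=
      fun u hu => setIntegral_nonneg measurableSet_Ioc fun s hs =>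
        div_nonneg (sq_nonneg _) (mul_pos hs.1 (hEpos u hu s hs.1)).le
    refine (setIntegral_le_mul_setIntegral_prod_add measurableSet_Ioc hu₀_fin (hf r hr.1) (hFr r)
      (g := fun u => ξ u r ^ 2 / E u r) (K := 1 / (2 * π) * δ)
      (fun u hu => div_nonneg (sq_nonneg _) (hEpos u hu r hr.1).le) fun u hu =>
        le_abs_mul_add_of_le_mul_add
          (hSobolev u (Ioc_subset_Icc_self hu) r hr.1 r ⟨hr.1, le_rfl⟩) (hI_nonneg u hu)
          (by positivity) (hE u (Ioc_subset_Icc_self hu) r hr)).trans_eq ?_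
    rw [Real.volume_real_Ioc_of_le hu₀.le, sub_zero]
    ring

/-- Abstract final step for the key function `ξ/√(e^{ν+λ})`: continuity and
vanishing of `ξ` at the center, monotonicity/continuity of `E ∈ (0,1]` in `r`,
integrability of `ξ²/(r E)` over `[0,u₀] × (0,r₀]`, a pointwise Sobolev bound,
and uniform (in `u`) continuity of `E` up to `r = 0` together imply
`∫₀^{u₀} (ξ²/E)(u,r) du → 0` as `r → 0⁺`. -/
theorem xi_over_sqrtE_vanishes_at_center
    (u₀ : ℝ) (hu₀ : 0 < u₀)
    (ξ E : ℝ → ℝ → ℝ) (E0 : ℝ → ℝ) (C c : ℝ) (F : ℝ → ℝ)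
    (hF : Continuous F)
    (hξcont : ∀ u ∈ Set.Icc (0:ℝ) u₀, ContinuousOn (ξ u) (Set.Ioi 0))
    (hξ0 : ∀ u ∈ Set.Icc (0:ℝ) u₀,
      Tendsto (ξ u) (nhdsWithin 0 (Set.Ioi 0)) (nhds 0))
    (hEmono : ∀ u ∈ Set.Icc (0:ℝ) u₀, MonotoneOn (E u) (Set.Ioi 0))
    (hEcont : ∀ u ∈ Set.Icc (0:ℝ) u₀, ContinuousOn (E u) (Set.Ioi 0))
    (hErange : ∀ u ∈ Set.Icc (0:ℝ) u₀, ∀ r > (0:ℝ), E u r ∈ Set.Ioc (0:ℝ) 1)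
    (hInt : ∀ r₀ > (0:ℝ),
      IntegrableOn (fun p : ℝ × ℝ => ξ p.1 p.2 ^ 2 / (p.2 * E p.1 p.2))
        (Set.Icc 0 u₀ ×ˢ Set.Ioc 0 r₀) volume)
    (hSobolev : ∀ u ∈ Set.Icc (0:ℝ) u₀, ∀ r₀ > (0:ℝ), ∀ r ∈ Set.Ioc (0:ℝ) r₀,
      ξ u r ^ 2 / E u r
        ≤ C * ((∫ s in Set.Ioc (0:ℝ) r₀, ξ u s ^ 2 / (s * E u s))
            + c ^ 4 * r₀ ^ 3 * F u
            + (1 / (2 * π)) * (E u r₀ - E0 u)))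
    (hEunif : ∀ ε > (0:ℝ), ∃ r₀ > (0:ℝ), ∀ u ∈ Set.Icc (0:ℝ) u₀,
      ∀ r ∈ Set.Ioc (0:ℝ) r₀, |E u r - E0 u| ≤ ε) :
    Tendsto (fun r : ℝ => ∫ u in (0:ℝ)..u₀, ξ u r ^ 2 / E u r)
      (nhdsWithin 0 (Set.Ioi 0)) (nhds 0) :=
  xi_over_sqrtE_vanishes_at_center_general u₀ hu₀ ξ E E0 C c F hF hErange hInt hSobolev hEunif
end
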